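/- arXiv:1201.4867 — 9 statements merged into one kernel-verified Lean document; each statement's English description precedes it below -/
import Mathlib

section
/- For every additive subgroup H of G, the cardinalities satisfy |H^⊥| · |H| = 𝔤 (the order of G). -/
/-- The character `χ_g` of the finite abelian group `G = ∀ i, ZMod (d i)`:
`χ_g(h) = exp(2πi · Σ i, g i · h i / d i)`. -/
noncomputable def chi {m : ℕ} {d : Fin m → ℕ} (g h : ∀ i, ZMod (d i)) : ℂ :=
  Complex.exp (2 * Real.pi * Complex.I *
    ∑ i, ((g i).val : ℂ) * ((h i).val : ℂ) / ((d i : ℕ) : ℂ))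

open Complex Finset

/-- `chi` as product of standard additive characters. -/
lemma chi_eq {m : ℕ} {d : Fin m → ℕ} [∀ i, NeZero (d i)] (g h : ∀ i, ZMod (d i)) :
    chi g h = ∏ i, ZMod.stdAddChar (g i * h i) := by
  rw [chi, Finset.mul_sum, Complex.exp_sum]
  refine Finset.prod_congr rfl fun i _ => ?_
  have : g i * h i = ((((g i).val * (h i).val : ℕ) : ℤ) : ZMod (d i)) := by
    push_cast
    rw [ZMod.natCast_val, ZMod.natCast_val, ZMod.cast_id, ZMod.cast_id]
  rw [this, ZMod.stdAddChar_coe]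
  push_cast
  ring_nf

/-- The character as a bundled `AddChar`. -/
noncomputable def chiChar {m : ℕ} {d : Fin m → ℕ} [∀ i, NeZero (d i)]
    (g : ∀ i, ZMod (d i)) : AddChar (∀ i, ZMod (d i)) ℂ where
  toFun h := ∏ i, ZMod.stdAddChar (g i * h i)
  map_zero_eq_one' := by simp
  map_add_eq_mul' := by
    intro a b
    simp only [Pi.add_apply, mul_add, AddChar.map_add_eq_mul]
    rw [Finset.prod_mul_distrib]

lemma chiChar_apply {m : ℕ} {d : Fin m → ℕ} [∀ i, NeZero (d i)]
    (g h : ∀ i, ZMod (d i)) : chiChar g h = chi g h := (chi_eq g h).symm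

lemma chi_comm {m : ℕ} {d : Fin m → ℕ} [∀ i, NeZero (d i)] (g h : ∀ i, ZMod (d i)) :
    chi g h = chi h g := by
  simp only [chi_eq, mul_comm]

lemma chiChar_ne_one {m : ℕ} {d : Fin m → ℕ} [∀ i, NeZero (d i)]
    {g : ∀ i, ZMod (d i)} (hg : g ≠ 0) : chiChar g ≠ 1 := by
  obtain ⟨i, hi⟩ : ∃ i, g i ≠ 0 := by
    by_contra hc
    push_neg at hc
    exact hg (funext hc)
  rw [AddChar.ne_one_iff]
  refine ⟨Pi.single i 1, ?_⟩
  have : (chiChar g) (Pi.single i 1) = ZMod.stdAddChar (g i) := by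
    show (∏ j, ZMod.stdAddChar (g j * Pi.single i 1 j)) = _
    rw [Fintype.prod_eq_single i]
    · simp
    · intro j hj
      simp [Pi.single_eq_of_ne hj]
  rw [this]
  intro hone
  apply hi
  have := ZMod.injective_stdAddChar (N := d i) (a₁ := g i) (a₂ := 0)
  simp only [AddChar.map_zero_eq_one] at this
  exact this hone


/-- For every additive subgroup `H` of `G`, `|H^⊥| · |H| = 𝔤`. -/
theorem stmt_0 (m : ℕ) (hm : 0 < m) (d : Fin m → ℕ) [∀ i, NeZero (d i)]
    (H : AddSubgroup (∀ i, ZMod (d i))) :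
    ({g : ∀ i, ZMod (d i) | ∀ h ∈ H, chi g h = 1}.ncard) * Nat.card H =
      Fintype.card (∀ i, ZMod (d i)) := by
  classical
  set G := ∀ i, ZMod (d i) with hG
  haveI : Fintype H := Fintype.ofFinite H
  set T : Finset G := Finset.univ.filter (fun g => ∀ h ∈ H, chi g h = 1) with hTdef
  have hT : ({g : G | ∀ h ∈ H, chi g h = 1}).ncard = T.card := by
    rw [Set.ncard_eq_toFinset_card']
    congr 1
    ext g
    simp [hTdef]
  -- inner sums
  have inner_eq : ∀ g : G, (∑ h : H, chi g (h : G)) =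
      if (∀ h ∈ H, chi g h = 1) then (Nat.card H : ℂ) else 0 := by
    intro g
    by_cases hg : ∀ h ∈ H, chi g h = 1
    · rw [if_pos hg]
      rw [Finset.sum_congr rfl (fun h _ => hg h.1 h.2)]
      simp [Nat.card_eq_fintype_card]
    · rw [if_neg hg]
      have hsum : ∀ h : H, chi g (h : G) = ((chiChar g).compAddMonoidHom H.subtype) h := by
        intro h
        rw [AddChar.compAddMonoidHom_apply, chiChar_apply]
        rfl
      rw [Finset.sum_congr rfl (fun h _ => hsum h)]
      refine AddChar.sum_eq_zero_of_ne_one ?_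
      rw [AddChar.ne_one_iff]
      push_neg at hg
      obtain ⟨h0, hmem, hne⟩ := hg
      exact ⟨⟨h0, hmem⟩, by rw [← hsum ⟨h0, hmem⟩] at *; exact hne⟩
  have outer_eq : ∀ hh : H, (∑ g : G, chi g (hh : G)) =
      if (hh : G) = 0 then (Fintype.card G : ℂ) else 0 := by
    intro hh
    by_cases h0 : (hh : G) = 0
    · rw [if_pos h0]
      have : ∀ g : G, chi g (hh : G) = 1 := by
        intro g
        simp [chi, h0]
      rw [Finset.sum_congr rfl (fun g _ => this g)]
      simp
    · rw [if_neg h0]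
      have hne : chiChar (hh : G) ≠ 1 := chiChar_ne_one h0
      have : ∀ g : G, chi g (hh : G) = chiChar (hh : G) g := by
        intro g
        rw [chi_comm, chiChar_apply]
      rw [Finset.sum_congr rfl (fun g _ => this g)]
      exact AddChar.sum_eq_zero_of_ne_one hne
  have key : (T.card : ℂ) * (Nat.card H : ℂ) = (Fintype.card G : ℂ) := by
    have S1 : (∑ g : G, ∑ h : H, chi g (h : G)) = (T.card : ℂ) * (Nat.card H : ℂ) := by
      rw [Finset.sum_congr rfl (fun g _ => inner_eq g)]
      rw [Finset.sum_ite, Finset.sum_const, Finset.sum_const_zero, add_zero, hTdef]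
      simp [nsmul_eq_mul]
    have S2 : (∑ g : G, ∑ h : H, chi g (h : G)) = (Fintype.card G : ℂ) := by
      rw [Finset.sum_comm]
      rw [Finset.sum_congr rfl (fun h _ => outer_eq h)]
      have : ∀ h : H, ((h : G) = 0) ↔ (h = 0) := by
        intro h
        exact ZeroMemClass.coe_eq_zero
      simp only [this]
      rw [Finset.sum_ite_eq' Finset.univ (0 : H) (fun _ => (Fintype.card G : ℂ))]
      simp
    rw [← S1, S2]
  rw [hT]
  exact_mod_cast key
end

section
/- Let H be an additive subgroup of G and let ψ_H : G → ℂ be the normalized indicator vector of H, i.e. ψ_H(g) = 1/√|H| if g ∈ H and ψ_H(g) = 0 otherwise. Then the matrix–vector product F.mulVec ψ_H equals the vector that takes the value √(|H|/𝔤) on every element of H^⊥ and the value 0 on every element outside H^⊥. -/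
/-!
Each `chi g` is an additive character of `G`: it is the product over `i` of the standard
characters `ZMod.stdAddChar (g i * ·)` of the factors `ZMod (d i)`. A character's sum over `H`
is `|H|` when it is trivial on `H`, i.e. when `g ∈ H^⊥`, and `0` otherwise, so
`(F ψ_H) g = |H| / (√𝔤 √|H|) = √(|H| / 𝔤)` on `H^⊥` and vanishes elsewhere.
-/

open scoped Classical

open Finset

lemma Fintype.sum_ite_eq_sum_subtype {α M : Type*} [Fintype α] [AddCommMonoid M]
    (p : α → Prop) [DecidablePred p] (f : α → M) :
    ∑ x, (if p x then f x else 0) = ∑ x : Subtype p, f x := by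
  rw [← sum_filter]
  exact sum_subtype _ (by simp) f

lemma Real.div_sqrt_mul_sqrt_eq_sqrt_div {a : ℝ} (b : ℝ) (ha : 0 ≤ a) :
    a / (√b * √a) = √(a / b) := by
  rw [Real.sqrt_div ha, mul_comm, ← div_div, Real.div_sqrt]

lemma AddChar.sum_addSubgroup_eq_zero {G R : Type*} [AddGroup G] [CommRing R] [IsDomain R]
    (ψ : AddChar G R) (H : AddSubgroup G) [Fintype H] (hψ : ¬ ∀ h ∈ H, ψ h = 1) :
    ∑ h : H, ψ h = 0 := by
  refine (ψ.compAddMonoidHom H.subtype).sum_eq_ite.trans (if_neg ?_)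
  simpa [AddChar.eq_zero_iff] using hψ

section chi

variable {m : ℕ} {d : Fin m → ℕ} [∀ i, NeZero (d i)]

lemma chi_eq_prod_stdAddChar (g h : ∀ i, ZMod (d i)) :
    chi g h = ∏ i, ZMod.stdAddChar (g i * h i) := by
  have hmul : ∀ i, g i * h i = (((g i).val * (h i).val : ℕ) : ℤ) := by
    intro i; simp
  simp only [hmul, ZMod.stdAddChar_coe, chi, ← Complex.exp_sum, mul_sum]
  congr 1
  refine sum_congr rfl fun i _ => ?_
  push_cast
  ring

noncomputable def chiAddChar (g : ∀ i, ZMod (d i)) : AddChar (∀ i, ZMod (d i)) ℂ where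
  toFun := chi g
  map_zero_eq_one' := by simp [chi_eq_prod_stdAddChar]
  map_add_eq_mul' a b := by
    simp only [chi_eq_prod_stdAddChar, Pi.add_apply, mul_add, AddChar.map_add_eq_mul,
      prod_mul_distrib]

end chi

theorem stmt_2_general (m : ℕ) (d : Fin m → ℕ) [∀ i, NeZero (d i)]
    (H : AddSubgroup (∀ i, ZMod (d i)))
    (F : Matrix (∀ i, ZMod (d i)) (∀ i, ZMod (d i)) ℂ)
    (hF : ∀ g h, F g h = chi g h / Real.sqrt (Fintype.card (∀ i, ZMod (d i))))
    (ψ : (∀ i, ZMod (d i)) → ℂ)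
    (hψ : ∀ g, ψ g = if g ∈ H then (1 / (Real.sqrt (Nat.card H) : ℂ)) else 0) :
    F.mulVec ψ = fun g =>
      if g ∈ {x : ∀ i, ZMod (d i) | ∀ h ∈ H, chi x h = 1} then
        ((Real.sqrt ((Nat.card H : ℝ) / (Fintype.card (∀ i, ZMod (d i)) : ℝ)) : ℝ) : ℂ)
      else 0 := by
  funext g
  have hF_mulVec : F.mulVec ψ g = (∑ h : H, chi g h) /
      (√(Fintype.card (∀ i, ZMod (d i))) * √(Nat.card H) : ℝ) := by
    simp only [Matrix.mulVec, dotProduct, hF, hψ, mul_ite, mul_zero,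
      Fintype.sum_ite_eq_sum_subtype, sum_div]
    refine sum_congr rfl fun h _ => ?_
    push_cast
    ring
  rw [hF_mulVec]
  split_ifs with hg
  · have hone : ∀ h : H, chi g h = 1 := fun h => hg h h.2
    simp only [hone, sum_const, card_univ, ← Nat.card_eq_fintype_card, nsmul_eq_mul, mul_one,
      ← Real.div_sqrt_mul_sqrt_eq_sqrt_div _ (Nat.cast_nonneg _)]
    norm_cast
  · have hzero : ∑ h : H, chi g h = 0 := (chiAddChar g).sum_addSubgroup_eq_zero H hg
    rw [hzero, zero_div]

/-- The Fourier transform of the normalized indicator vector of a subgroup `H` is the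
vector with value `√(|H|/𝔤)` on `H^⊥` and `0` elsewhere. -/
theorem stmt_2 (m : ℕ) (hm : 0 < m) (d : Fin m → ℕ) [∀ i, NeZero (d i)]
    (H : AddSubgroup (∀ i, ZMod (d i)))
    (F : Matrix (∀ i, ZMod (d i)) (∀ i, ZMod (d i)) ℂ)
    (hF : ∀ g h, F g h = chi g h / Real.sqrt (Fintype.card (∀ i, ZMod (d i))))
    (ψ : (∀ i, ZMod (d i)) → ℂ)
    (hψ : ∀ g, ψ g = if g ∈ H then (1 / (Real.sqrt (Nat.card H) : ℂ)) else 0) :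
    F.mulVec ψ = fun g =>
      if g ∈ {x : ∀ i, ZMod (d i) | ∀ h ∈ H, chi x h = 1} then
        ((Real.sqrt ((Nat.card H : ℝ) / (Fintype.card (∀ i, ZMod (d i)) : ℝ)) : ℝ) : ℂ)
      else 0 :=
  stmt_2_general m d H F hF ψ hψ
end

section
/- Let ξ and ξ' be quadratic functions on G (each with some associated bilinear function). If ξ(e^i) = ξ'(e^i) for all i and ξ(e^i + e^j) = ξ'(e^i + e^j) for all i, j, then ξ = ξ'. In other words, a quadratic function on G is completely determined by its values on the elements e^i and e^i + e^j. -/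
/-!
The bilinear forms `B`, `B'` of `ξ`, `ξ'` agree on pairs of generators, since
`B (e^i, e^j) = ξ (e^i + e^j) / (ξ (e^i) ξ (e^j))`. Their quotient is bilinear and equal to `1`
on pairs of generators, hence identically `1` because the `e^i` generate `G`. With `B = B'`,
the quotient `ξ / ξ'` is a character of `G` that is trivial on the `e^i`, hence trivial.
-/

/-- A function `B : G × G → ℂ` with nowhere-zero values is bilinear. -/
def IsBilinear {m : ℕ} {d : Fin m → ℕ}
    (B : (∀ i, ZMod (d i)) × (∀ i, ZMod (d i)) → ℂ) : Prop :=
  (∀ p, B p ≠ 0) ∧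
  (∀ g h x : ∀ i, ZMod (d i), B (g + h, x) = B (g, x) * B (h, x)) ∧
  (∀ x g h : ∀ i, ZMod (d i), B (x, g + h) = B (x, g) * B (x, h))

/-- A function `ξ : G → ℂ` with nowhere-zero values is quadratic if
`ξ(g+h) = ξ(g)ξ(h)B(g,h)` for some bilinear `B`. -/
def IsQuadratic {m : ℕ} {d : Fin m → ℕ} (ξ : (∀ i, ZMod (d i)) → ℂ) : Prop :=
  (∀ g, ξ g ≠ 0) ∧
  ∃ B : (∀ i, ZMod (d i)) × (∀ i, ZMod (d i)) → ℂ, IsBilinear B ∧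
    ∀ g h : ∀ i, ZMod (d i), ξ (g + h) = ξ g * ξ h * B (g, h)

theorem eq_one_of_closure_eq_top {G M : Type*} [AddGroup G] [Monoid M] {φ : G → M}
    (hzero : φ 0 = 1) (hadd : ∀ g h, φ (g + h) = φ g * φ h) {S : Set G}
    (hS : AddSubgroup.closure S = ⊤) (hφS : ∀ s ∈ S, φ s = 1) (g : G) : φ g = 1 := by
  have hg : g ∈ AddSubgroup.closure S := hS ▸ AddSubgroup.mem_top g
  induction hg using AddSubgroup.closure_induction with
  | mem s hs => exact hφS s hs
  | zero => exact hzero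
  | add x y _ _ hx hy => rw [hadd, hx, hy, one_mul]
  | neg x _ hx =>
    have h := hadd (-x) x
    rwa [neg_add_cancel, hzero, hx, mul_one, eq_comm] at h

theorem eq_one_of_closure_eq_top₀ {G M₀ : Type*} [AddGroup G] [MonoidWithZero M₀]
    [IsLeftCancelMulZero M₀] {φ : G → M₀} (hadd : ∀ g h, φ (g + h) = φ g * φ h)
    (hφ : φ 0 ≠ 0) {S : Set G} (hS : AddSubgroup.closure S = ⊤) (hφS : ∀ s ∈ S, φ s = 1)
    (g : G) : φ g = 1 :=
  eq_one_of_closure_eq_top (mul_left_cancel₀ hφ (by rw [← hadd, add_zero, mul_one])).symm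
    hadd hS hφS g

theorem closure_range_single_one {ι : Type*} [Fintype ι] [DecidableEq ι] (d : ι → ℕ) :
    AddSubgroup.closure (Set.range fun i => Pi.single i (1 : ZMod (d i))) = ⊤ := by
  refine eq_top_iff.2 fun g _ => ?_
  rw [← Finset.univ_sum_single g]
  refine AddSubgroup.sum_mem _ fun i _ => ?_
  rw [← ZMod.intCast_zmod_cast (g i), ← zsmul_one, Pi.single_smul]
  exact AddSubgroup.zsmul_mem _ (AddSubgroup.subset_closure (Set.mem_range_self i)) _

section

variable {m : ℕ} {d : Fin m → ℕ}

theorem IsBilinear.div {B B' : (∀ i, ZMod (d i)) × (∀ i, ZMod (d i)) → ℂ}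
    (hB : IsBilinear B) (hB' : IsBilinear B') : IsBilinear fun p => B p / B' p := by
  obtain ⟨hB0, hBl, hBr⟩ := hB
  obtain ⟨hB'0, hB'l, hB'r⟩ := hB'
  refine ⟨fun p => div_ne_zero (hB0 p) (hB'0 p), fun g h x => ?_, fun x g h => ?_⟩
  · simp only [hBl, hB'l, mul_div_mul_comm]
  · simp only [hBr, hB'r, mul_div_mul_comm]

theorem IsBilinear.eq_one_of_single {C : (∀ i, ZMod (d i)) × (∀ i, ZMod (d i)) → ℂ}
    (hC : IsBilinear C) (h : ∀ i j, C (Pi.single i 1, Pi.single j 1) = 1) (p) : C p = 1 := by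
  obtain ⟨hC0, hCl, hCr⟩ := hC
  obtain ⟨x, y⟩ := p
  have hrow (i : Fin m) : C (Pi.single i 1, y) = 1 :=
    have hadd := hCr (Pi.single i 1)
    eq_one_of_closure_eq_top₀ (φ := fun y => C (Pi.single i 1, y)) hadd (hC0 _)
      (closure_range_single_one d) (by rintro _ ⟨j, rfl⟩; exact h i j) y
  have hadd (x x' : ∀ i, ZMod (d i)) : C (x + x', y) = C (x, y) * C (x', y) := hCl x x' y
  exact eq_one_of_closure_eq_top₀ (φ := fun x => C (x, y)) hadd (hC0 _)
    (closure_range_single_one d) (by rintro _ ⟨i, rfl⟩; exact hrow i) x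

theorem IsBilinear.eq_of_single {B B' : (∀ i, ZMod (d i)) × (∀ i, ZMod (d i)) → ℂ}
    (hB : IsBilinear B) (hB' : IsBilinear B')
    (h : ∀ i j, B (Pi.single i 1, Pi.single j 1) = B' (Pi.single i 1, Pi.single j 1)) :
    B = B' := by
  funext p
  refine (div_eq_one_iff_eq (hB'.1 p)).1 ((hB.div hB').eq_one_of_single (fun i j => ?_) p)
  rw [h, div_self (hB'.1 _)]

end

theorem stmt_8_general (m : ℕ) (d : Fin m → ℕ)
    (ξ ξ' : (∀ i, ZMod (d i)) → ℂ) (hξ : IsQuadratic ξ) (hξ' : IsQuadratic ξ')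
    (he : ∀ i : Fin m, ξ (Pi.single i 1) = ξ' (Pi.single i 1))
    (hee : ∀ i j : Fin m,
      ξ (Pi.single i 1 + Pi.single j 1) = ξ' (Pi.single i 1 + Pi.single j 1)) :
    ξ = ξ' := by
  obtain ⟨hξ0, B, hB, hξB⟩ := hξ
  obtain ⟨hξ'0, B', hB', hξ'B'⟩ := hξ'
  obtain rfl : B = B' := hB.eq_of_single hB' fun i j => by
    have h := hξB (Pi.single i 1) (Pi.single j 1)
    rw [hee, he i, he j, hξ'B'] at h
    exact (mul_left_cancel₀ (mul_ne_zero (hξ'0 _) (hξ'0 _)) h).symm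
  have hadd (g h) : ξ (g + h) / ξ' (g + h) = ξ g / ξ' g * (ξ h / ξ' h) := by
    rw [hξB, hξ'B', mul_div_mul_right _ _ (hB.1 _), mul_div_mul_comm]
  have hgen : ∀ s ∈ Set.range fun i => Pi.single i 1, ξ s / ξ' s = 1 := by
    rintro _ ⟨i, rfl⟩
    exact (div_eq_one_iff_eq (hξ'0 _)).2 (he i)
  funext g
  exact (div_eq_one_iff_eq (hξ'0 g)).1 <| eq_one_of_closure_eq_top₀ (φ := fun g => ξ g / ξ' g)
    hadd (div_ne_zero (hξ0 0) (hξ'0 0)) (closure_range_single_one d) hgen g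

/-- A quadratic function on `G` is completely determined by its values on the generators
`e^i = Pi.single i 1` and on the sums `e^i + e^j`. -/
theorem stmt_8 (m : ℕ) (hm : 0 < m) (d : Fin m → ℕ) [∀ i, NeZero (d i)]
    (ξ ξ' : (∀ i, ZMod (d i)) → ℂ) (hξ : IsQuadratic ξ) (hξ' : IsQuadratic ξ')
    (he : ∀ i : Fin m, ξ (Pi.single i 1) = ξ' (Pi.single i 1))
    (hee : ∀ i j : Fin m,
      ξ (Pi.single i 1 + Pi.single j 1) = ξ' (Pi.single i 1 + Pi.single j 1)) :
    ξ = ξ' :=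
  stmt_8_general m d ξ ξ' hξ hξ' he hee
end

section
/- Let a ∈ ℕ and g, h ∈ G, and let σ = γ^a • (Z(g)·X(h)) be the corresponding Pauli operator over G. Then the conjugate transpose of σ equals σ^(2𝔤 − 1); in particular σ^(2𝔤) is the identity matrix. -/
open scoped Matrix

/-- The Pauli `X`-type matrix: `X(g)_{h,k} = 1` if `h = k + g`, else `0`. -/
noncomputable def Xop {m : ℕ} {d : Fin m → ℕ} (g : ∀ i, ZMod (d i)) :
    Matrix (∀ i, ZMod (d i)) (∀ i, ZMod (d i)) ℂ :=
  Matrix.of fun h k => if h = k + g then (1 : ℂ) else 0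

/-- The Pauli `Z`-type matrix: the diagonal matrix with entries `χ_g(h)`. -/
noncomputable def Zop {m : ℕ} {d : Fin m → ℕ} (g : ∀ i, ZMod (d i)) :
    Matrix (∀ i, ZMod (d i)) (∀ i, ZMod (d i)) ℂ :=
  Matrix.diagonal fun h => chi g h

section aux
variable {m : ℕ} {d : Fin m → ℕ} [∀ i, NeZero (d i)]

lemma pow_mod_of_pow_eq_one {ζ : ℂ} {n : ℕ} (h : ζ ^ n = 1) (a : ℕ) :
    ζ ^ a = ζ ^ (a % n) := by
  conv_lhs => rw [← Nat.mod_add_div a n]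
  rw [pow_add, pow_mul, h, one_pow, mul_one]

lemma chi_eq_prod (g h : ∀ i, ZMod (d i)) :
    chi g h = ∏ i, Complex.exp (2 * Real.pi * Complex.I / (d i : ℂ)) ^ ((g i).val * (h i).val) := by
  unfold chi
  rw [Finset.mul_sum, Complex.exp_sum]
  refine Finset.prod_congr rfl fun i _ => ?_
  rw [← Complex.exp_nat_mul]
  congr 1
  push_cast
  ring

lemma root_pow_d (i : Fin m) :
    Complex.exp (2 * Real.pi * Complex.I / (d i : ℂ)) ^ (d i) = 1 := by
  rw [← Complex.exp_nat_mul]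
  have hd : ((d i : ℕ) : ℂ) ≠ 0 := Nat.cast_ne_zero.mpr (NeZero.ne _)
  rw [mul_div_cancel₀ _ hd, Complex.exp_two_pi_mul_I]

lemma chi_add_right (g x y : ∀ i, ZMod (d i)) :
    chi g (x + y) = chi g x * chi g y := by
  rw [chi_eq_prod, chi_eq_prod, chi_eq_prod, ← Finset.prod_mul_distrib]
  refine Finset.prod_congr rfl fun i _ => ?_
  rw [← pow_add, pow_mod_of_pow_eq_one (root_pow_d i),
    pow_mod_of_pow_eq_one (root_pow_d i) ((g i).val * (x i).val + (g i).val * (y i).val)]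
  congr 1
  have hxy : ((x + y) i) = x i + y i := rfl
  rw [hxy, ZMod.val_add]
  have hmod := (Nat.mod_modEq ((x i).val + (y i).val) (d i)).mul_left ((g i).val)
  rw [Nat.ModEq] at hmod
  rw [hmod, Nat.mul_add]

lemma chi_zero_right (g : ∀ i, ZMod (d i)) : chi g 0 = 1 := by
  simp [chi]

lemma chi_nsmul (g x : ∀ i, ZMod (d i)) (n : ℕ) :
    chi g (n • x) = chi g x ^ n := by
  induction n with
  | zero => simp [chi_zero_right]
  | succ k ih => rw [succ_nsmul, chi_add_right, ih, pow_succ]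

lemma chi_pow_card (g x : ∀ i, ZMod (d i)) :
    chi g x ^ Fintype.card (∀ i, ZMod (d i)) = 1 := by
  rw [← chi_nsmul, card_nsmul_eq_zero, chi_zero_right]

lemma chi_star_mul_self (g x : ∀ i, ZMod (d i)) :
    (starRingEnd ℂ) (chi g x) * chi g x = 1 := by
  have hs : (starRingEnd ℂ) (∑ i, ((g i).val : ℂ) * ((x i).val : ℂ) / ((d i : ℕ) : ℂ))
      = ∑ i, ((g i).val : ℂ) * ((x i).val : ℂ) / ((d i : ℕ) : ℂ) := by
    simp only [map_sum, map_div₀, map_mul, Complex.conj_natCast]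
  have key : (starRingEnd ℂ) (2 * (Real.pi : ℂ) * Complex.I *
      (∑ i, ((g i).val : ℂ) * ((x i).val : ℂ) / ((d i : ℕ) : ℂ)))
      = -(2 * (Real.pi : ℂ) * Complex.I *
      (∑ i, ((g i).val : ℂ) * ((x i).val : ℂ) / ((d i : ℕ) : ℂ))) := by
    rw [map_mul, hs, map_mul, map_mul, Complex.conj_I, Complex.conj_ofReal, map_ofNat]
    ring
  rw [chi, ← Complex.exp_conj, key, ← Complex.exp_add, neg_add_cancel, Complex.exp_zero]

lemma Xop_mul (g h : ∀ i, ZMod (d i)) : Xop g * Xop h = Xop (g + h) := by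
  ext u v
  simp only [Matrix.mul_apply, Xop, Matrix.of_apply]
  rw [Finset.sum_eq_single (v + h)]
  · rw [if_pos rfl, mul_one, add_assoc, add_comm h g]
  · intro k _ hk
    rw [if_neg hk, mul_zero]
  · intro habs; exact absurd (Finset.mem_univ _) habs

lemma Xop_zero : Xop (0 : ∀ i, ZMod (d i)) = 1 := by
  ext u v
  simp [Xop, Matrix.one_apply]

lemma Xop_pow (h : ∀ i, ZMod (d i)) (n : ℕ) : Xop h ^ n = Xop (n • h) := by
  induction n with
  | zero => simp [Xop_zero]
  | succ k ih => rw [pow_succ, ih, Xop_mul, succ_nsmul]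

lemma Xop_conjTranspose (h : ∀ i, ZMod (d i)) : (Xop h)ᴴ = Xop (-h) := by
  ext u v
  simp only [Matrix.conjTranspose_apply, Xop, Matrix.of_apply]
  rw [apply_ite star, star_one, star_zero]
  congr 1
  have : (v = u + h) ↔ (u = v + -h) := by
    constructor <;> (intro e; subst e; abel)
  simp [this]

lemma Xop_mul_Zop (g h : ∀ i, ZMod (d i)) :
    Xop h * Zop g = chi g (-h) • (Zop g * Xop h) := by
  ext u v
  rw [Zop, Matrix.mul_diagonal, Matrix.smul_apply, Matrix.diagonal_mul]
  by_cases huv : u = v + h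
  · subst huv
    simp only [Xop, Matrix.of_apply, eq_self_iff_true, if_true, mul_one, one_mul, smul_eq_mul]
    rw [← chi_add_right]
    congr 1
    abel
  · simp [Xop, huv]

lemma Xop_mul_Zop_pow (g h : ∀ i, ZMod (d i)) (n : ℕ) :
    Xop h * Zop g ^ n = chi g (-h) ^ n • (Zop g ^ n * Xop h) := by
  induction n with
  | zero => simp
  | succ k ih =>
    rw [pow_succ, ← mul_assoc, ih, Matrix.smul_mul, mul_assoc, Xop_mul_Zop,
      Matrix.mul_smul, smul_smul, ← pow_succ, ← mul_assoc, ← pow_succ]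

lemma ZX_pow (g h : ∀ i, ZMod (d i)) (n : ℕ) :
    (Zop g * Xop h) ^ n = chi g (-h) ^ (n.choose 2) • (Zop g ^ n * Xop h ^ n) := by
  induction n with
  | zero => simp
  | succ k ih =>
    rw [pow_succ', ih, Matrix.mul_smul, show Zop g * Xop h * (Zop g ^ k * Xop h ^ k)
        = Zop g * (Xop h * Zop g ^ k) * Xop h ^ k by simp only [mul_assoc],
      Xop_mul_Zop_pow, Matrix.mul_smul, Matrix.smul_mul, smul_smul, ← pow_add]
    rw [show Zop g * (Zop g ^ k * Xop h) * Xop h ^ k = Zop g ^ (k+1) * Xop h ^ (k+1) by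
        rw [pow_succ', pow_succ']
        simp only [mul_assoc]]
    congr 2
    rw [Nat.choose_succ_succ k 1, Nat.choose_one_right]
    ring

end aux

/-- For the Pauli operator `σ = γ^a • Z(g)X(h)` with `γ = exp(πi/𝔤)`, the conjugate
transpose of `σ` equals `σ^(2𝔤−1)`, and `σ^(2𝔤) = 1`. -/
theorem stmt_10 (m : ℕ) (hm : 0 < m) (d : Fin m → ℕ) [∀ i, NeZero (d i)]
    (a : ℕ) (g h : ∀ i, ZMod (d i)) (γ : ℂ)
    (hγ : γ = Complex.exp (Real.pi * Complex.I / (Fintype.card (∀ i, ZMod (d i)) : ℂ)))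
    (σ : Matrix (∀ i, ZMod (d i)) (∀ i, ZMod (d i)) ℂ)
    (hσ : σ = γ ^ a • (Zop g * Xop h)) :
    σᴴ = σ ^ (2 * Fintype.card (∀ i, ZMod (d i)) - 1) ∧
    σ ^ (2 * Fintype.card (∀ i, ZMod (d i))) = 1 := by
  set 𝔤 := Fintype.card (∀ i, ZMod (d i)) with h𝔤
  have hcard : 0 < 𝔤 := Fintype.card_pos
  have hcast : (𝔤 : ℂ) ≠ 0 := Nat.cast_ne_zero.mpr hcard.ne'
  -- γ ^ (2𝔤) = 1
  have hγpow : γ ^ (2 * 𝔤) = 1 := by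
    rw [hγ, ← Complex.exp_nat_mul]
    rw [show ((2 * 𝔤 : ℕ) : ℂ) * (Real.pi * Complex.I / (𝔤 : ℂ))
        = 2 * Real.pi * Complex.I by push_cast; field_simp]
    exact Complex.exp_two_pi_mul_I
  -- chi phase power
  have hcpow : chi g (-h) ^ ((2 * 𝔤).choose 2) = 1 := by
    have hc2 : (2 * 𝔤).choose 2 = 𝔤 * (2 * 𝔤 - 1) := by
      rw [Nat.choose_two_right, show 2 * 𝔤 * (2 * 𝔤 - 1) = 2 * (𝔤 * (2 * 𝔤 - 1)) by ring,
        Nat.mul_div_cancel_left _ (by norm_num : 0 < 2)]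
    rw [hc2, pow_mul, chi_pow_card, one_pow]
  -- Z ^ (2𝔤) = 1
  have hZ : Zop g ^ (2 * 𝔤) = 1 := by
    ext u v
    rw [Zop, Matrix.diagonal_pow]
    by_cases huv : u = v
    · subst huv
      rw [Matrix.diagonal_apply_eq, Matrix.one_apply_eq, Pi.pow_apply, mul_comm,
        pow_mul, chi_pow_card, one_pow]
    · rw [Matrix.diagonal_apply_ne _ huv, Matrix.one_apply_ne huv]
  -- X ^ (2𝔤) = 1
  have hX : Xop h ^ (2 * 𝔤) = 1 := by
    rw [Xop_pow, mul_smul, card_nsmul_eq_zero, smul_zero, Xop_zero]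
  -- σ ^ (2𝔤) = 1
  have h2 : σ ^ (2 * 𝔤) = 1 := by
    rw [hσ, smul_pow, ZX_pow, hZ, hX, smul_smul, ← pow_mul, mul_comm a, pow_mul,
      hγpow, one_pow, hcpow, mul_one, one_smul, one_mul]
  refine ⟨?_, h2⟩
  -- unitarity: σᴴ * σ = 1
  have hγconj : (starRingEnd ℂ) γ * γ = 1 := by
    have key : (starRingEnd ℂ) (Real.pi * Complex.I / (𝔤 : ℂ))
        = -(Real.pi * Complex.I / (𝔤 : ℂ)) := by
      rw [map_div₀, map_mul, Complex.conj_I, Complex.conj_ofReal, map_natCast]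
      ring
    rw [hγ, ← Complex.exp_conj, key, ← Complex.exp_add, neg_add_cancel, Complex.exp_zero]
  have hZZ : (Zop g)ᴴ * Zop g = 1 := by
    ext u v
    rw [Zop, Matrix.diagonal_conjTranspose, Matrix.diagonal_mul_diagonal]
    by_cases huv : u = v
    · subst huv
      simp only [Matrix.diagonal_apply_eq, Matrix.one_apply_eq, Pi.mul_apply,
        Pi.star_apply]
      exact chi_star_mul_self g u
    · rw [Matrix.diagonal_apply_ne _ huv, Matrix.one_apply_ne huv]
  have hunit : σᴴ * σ = 1 := by
    rw [hσ, Matrix.conjTranspose_smul, Matrix.conjTranspose_mul, Matrix.smul_mul,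
      Matrix.mul_smul, smul_smul, star_pow]
    rw [show (Xop h)ᴴ * (Zop g)ᴴ * (Zop g * Xop h)
        = (Xop h)ᴴ * ((Zop g)ᴴ * Zop g) * Xop h by simp only [mul_assoc]]
    rw [hZZ, mul_one, Xop_conjTranspose, Xop_mul, neg_add_cancel, Xop_zero,
      ← mul_pow]
    rw [show star γ = (starRingEnd ℂ) γ from rfl, hγconj, one_pow, one_smul]
  -- conclude
  have hsplit : σ ^ (2 * 𝔤) = σ * σ ^ (2 * 𝔤 - 1) := by
    rw [← pow_succ']
    congr 1
    omega
  calc σᴴ = σᴴ * 1 := by rw [mul_one]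
    _ = σᴴ * (σ * σ ^ (2 * 𝔤 - 1)) := by rw [← hsplit, h2]
    _ = (σᴴ * σ) * σ ^ (2 * 𝔤 - 1) := by rw [mul_assoc]
    _ = σ ^ (2 * 𝔤 - 1) := by rw [hunit, one_mul]
end

section
/- Let ϖ : G →+ G be an additive endomorphism and let ξ : G → ℂ take only nonzero values and satisfy ξ(g+h) = ξ(g)·ξ(h)·χ_{ϖ(g)}(h) for all g, h ∈ G (i.e. ξ is quadratic with endomorphism ϖ). Let D_ξ ∈ Matrix G G ℂ be the diagonal matrix with entries (D_ξ)_{g,g} = ξ(g). Then for every g ∈ G: D_ξ·X(g)·D_ξ⁻¹ = ξ(g) • (X(g)·Z(ϖ(g))) and D_ξ·Z(g)·D_ξ⁻¹ = Z(g). -/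
open Matrix

section DiagonalInverse

variable {n K : Type*} [Fintype n] [DecidableEq n] [Field K]

theorem Matrix.inv_diagonal_of_ne_zero {v : n → K} (hv : ∀ i, v i ≠ 0) :
    (diagonal v)⁻¹ = diagonal v⁻¹ := by
  let u : (n → K)ˣ := ⟨v, v⁻¹, funext fun i => mul_inv_cancel₀ (hv i),
    funext fun i => inv_mul_cancel₀ (hv i)⟩
  exact (inv_diagonal v).trans (congrArg diagonal (Ring.inverse_unit u))

theorem Matrix.diagonal_mul_diagonal_mul_inv_diagonal {v : n → K} (hv : ∀ i, v i ≠ 0) (w : n → K) :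
    diagonal v * diagonal w * (diagonal v)⁻¹ = diagonal w := by
  rw [inv_diagonal_of_ne_zero hv, diagonal_mul_diagonal, diagonal_mul_diagonal]
  congr 1
  funext i
  rw [Pi.inv_apply, mul_right_comm, mul_inv_cancel₀ (hv i), one_mul]

end DiagonalInverse

section Pauli

variable {m : ℕ} {d : Fin m → ℕ} [∀ i, NeZero (d i)]

theorem Xop_mul_diagonal (g : ∀ i, ZMod (d i)) (b : (∀ i, ZMod (d i)) → ℂ) :
    Xop g * diagonal b = of fun h k => if h = k + g then b k else 0 := by
  ext h k
  simp [Xop]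

theorem diagonal_mul_Xop_mul_diagonal (g : ∀ i, ZMod (d i)) (a b : (∀ i, ZMod (d i)) → ℂ) :
    diagonal a * Xop g * diagonal b = of fun h k => if h = k + g then a (k + g) * b k else 0 := by
  ext h k
  rw [mul_assoc, Xop_mul_diagonal, diagonal_mul, of_apply, of_apply]
  split_ifs with hhk <;> simp [hhk]

end Pauli

theorem stmt_13_general (m : ℕ) (d : Fin m → ℕ) [∀ i, NeZero (d i)]
    (ϖ : (∀ i, ZMod (d i)) →+ (∀ i, ZMod (d i)))
    (ξ : (∀ i, ZMod (d i)) → ℂ) (hξ0 : ∀ g, ξ g ≠ 0)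
    (hq : ∀ g h, ξ (g + h) = ξ g * ξ h * chi (ϖ g) h)
    (D : Matrix (∀ i, ZMod (d i)) (∀ i, ZMod (d i)) ℂ)
    (hD : D = Matrix.diagonal ξ) :
    ∀ g, D * Xop g * D⁻¹ = ξ g • (Xop g * Zop (ϖ g)) ∧ D * Zop g * D⁻¹ = Zop g := by
  subst hD
  intro g
  refine ⟨?_, diagonal_mul_diagonal_mul_inv_diagonal hξ0 _⟩
  have hshift : ∀ k, ξ (k + g) * (ξ k)⁻¹ = ξ g * chi (ϖ g) k := fun k => by
    rw [add_comm, hq, mul_right_comm, mul_inv_cancel_right₀ (hξ0 k)]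
  rw [inv_diagonal_of_ne_zero hξ0, diagonal_mul_Xop_mul_diagonal, Zop, Xop_mul_diagonal]
  ext h k
  by_cases hhk : h = k + g <;> simp [hhk, hshift]

/-- Conjugation of `X(g)` and `Z(g)` by the quadratic phase gate `D_ξ`, where `ξ` is
quadratic with endomorphism `ϖ`: `D_ξ X(g) D_ξ⁻¹ = ξ(g) • X(g) Z(ϖ(g))` and
`D_ξ Z(g) D_ξ⁻¹ = Z(g)`. -/
theorem stmt_13 (m : ℕ) (hm : 0 < m) (d : Fin m → ℕ) [∀ i, NeZero (d i)]
    (ϖ : (∀ i, ZMod (d i)) →+ (∀ i, ZMod (d i)))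
    (ξ : (∀ i, ZMod (d i)) → ℂ) (hξ0 : ∀ g, ξ g ≠ 0)
    (hq : ∀ g h, ξ (g + h) = ξ g * ξ h * chi (ϖ g) h)
    (D : Matrix (∀ i, ZMod (d i)) (∀ i, ZMod (d i)) ℂ)
    (hD : D = Matrix.diagonal ξ) :
    ∀ g, D * Xop g * D⁻¹ = ξ g • (Xop g * Zop (ϖ g)) ∧ D * Zop g * D⁻¹ = Zop g :=
  stmt_13_general m d ϖ ξ hξ0 hq D hD
end

section
/- Let 𝒢 be a group (under matrix multiplication) of monomial unitary matrices in Matrix S S ℂ and let ψ be the unique common +1 eigenvector of 𝒢. Then: (a) all nonzero amplitudes of ψ are equal in modulus, i.e. for all s, t ∈ S with ψ(s) ≠ 0 and ψ(t) ≠ 0 one has |ψ(s)| = |ψ(t)|; and (b) for every s ∈ S with ψ(s) ≠ 0, the support {t ∈ S : ψ(t) ≠ 0} equals the orbit O_s. -/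
/-!
A `U ∈ 𝒢` with `U e_s = c e_t` satisfies `|c| = 1`, and `U ψ = ψ` read through `Uᴴ = U⁻¹`
gives `ψ s = c̄ ψ t`; so amplitudes along an orbit have equal modulus and vanish together.
Conversely, a monomial matrix only mixes coordinates within one orbit, so the restriction of
`ψ` to the orbit of a point of its support is again a common fixed vector; by uniqueness it is a
multiple of `ψ`, hence `ψ` itself, and `ψ` vanishes off that orbit.
-/

open Matrix

namespace Matrix

variable {n α : Type*} [Fintype n]

section Semiring

variable [NonAssocSemiring α] {M : Matrix n n α}

lemma apply_eq_of_mulVec_single [DecidableEq n] {s t : n} {c : α}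
    (h : M *ᵥ Pi.single s 1 = c • Pi.single t 1) (i : n) :
    M i s = c * (Pi.single t 1 : n → α) i := by
  simpa using congrFun h i

lemma mulVec_single_eq_apply_smul_of_apply_ne_zero [DecidableEq n] {s t : n} {c : α}
    (h : M *ᵥ Pi.single s 1 = c • Pi.single t 1) {r : n} (hr : M r s ≠ 0) :
    M *ᵥ Pi.single s 1 = M r s • Pi.single r 1 := by
  obtain rfl : r = t := by
    by_contra hrt
    simp [apply_eq_of_mulVec_single h, hrt] at hr
  simpa [apply_eq_of_mulVec_single h] using h

lemma mulVec_indicator {T : Set n} (hT : ∀ r i, M r i ≠ 0 → (i ∈ T ↔ r ∈ T)) (v : n → α) :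
    M *ᵥ T.indicator v = T.indicator (M *ᵥ v) := by
  ext r
  by_cases hr : r ∈ T
  · simp only [Set.indicator_of_mem hr, mulVec, dotProduct]
    refine Finset.sum_congr rfl fun i _ => ?_
    by_cases hri : M r i = 0
    · simp [hri]
    · simp [Set.indicator_of_mem ((hT r i hri).2 hr)]
  · simp only [Set.indicator_of_notMem hr, mulVec, dotProduct]
    refine Finset.sum_eq_zero fun i _ => ?_
    by_cases hri : M r i = 0
    · simp [hri]
    · simp [Set.indicator_of_notMem (mt (hT r i hri).1 hr)]

end Semiring

section Star

variable [DecidableEq n] [CommRing α] [StarRing α] {s t : n} {c : α}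

lemma conjTranspose_mulVec_apply_of_mulVec_single {M : Matrix n n α}
    (h : M *ᵥ Pi.single s 1 = c • Pi.single t 1) (v : n → α) :
    (Mᴴ *ᵥ v) s = star c * v t := by
  simp [mulVec, dotProduct, apply_eq_of_mulVec_single h, Pi.single_apply, apply_ite star, ite_mul]

lemma star_mul_self_of_mulVec_single (U : unitaryGroup n α)
    (h : (U : Matrix n n α) *ᵥ Pi.single s 1 = c • Pi.single t 1) : star c * c = 1 := by
  have := conjTranspose_mulVec_apply_of_mulVec_single h ((U : Matrix n n α) *ᵥ Pi.single s 1)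
  rwa [mulVec_mulVec, ← star_eq_conjTranspose, UnitaryGroup.star_mul_self, one_mulVec, h,
    Pi.single_eq_same, Pi.smul_apply, Pi.single_eq_same, smul_eq_mul, mul_one, eq_comm] at this

lemma apply_eq_star_mul_of_mulVec_single {U : unitaryGroup n α}
    (h : (U : Matrix n n α) *ᵥ Pi.single s 1 = c • Pi.single t 1) {v : n → α}
    (hv : (U : Matrix n n α) *ᵥ v = v) : v s = star c * v t := by
  conv_lhs => rw [← one_mulVec v, ← UnitaryGroup.star_mul_self U, ← mulVec_mulVec, hv]
  exact conjTranspose_mulVec_apply_of_mulVec_single h v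

lemma norm_eq_one_of_mulVec_single {𝕜 : Type*} [RCLike 𝕜] {s t : n} {c : 𝕜}
    (U : unitaryGroup n 𝕜) (h : (U : Matrix n n 𝕜) *ᵥ Pi.single s 1 = c • Pi.single t 1) :
    ‖c‖ = 1 := by
  have hc := CStarRing.norm_star_mul_self (x := c)
  rw [star_mul_self_of_mulVec_single U h, norm_one] at hc
  exact (mul_self_eq_one_iff.1 hc.symm).resolve_right (by linarith [norm_nonneg c])

end Star

end Matrix

section MonomialGroup

variable {n α : Type*} [Fintype n] [DecidableEq n] [Field α] [StarRing α]

def Matrix.IsMonomial (M : Matrix n n α) : Prop :=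
  ∀ s, ∃ (c : α) (t : n), M *ᵥ Pi.single s 1 = c • Pi.single t 1

def monomialOrbit (𝒢 : Subgroup (unitaryGroup n α)) (s : n) : Set n :=
  {t | ∃ U ∈ 𝒢, ∃ c : α, c ≠ 0 ∧ (U : Matrix n n α) *ᵥ Pi.single s 1 = c • Pi.single t 1}

variable {𝒢 : Subgroup (unitaryGroup n α)} {s : n}

lemma self_mem_monomialOrbit : s ∈ monomialOrbit 𝒢 s :=
  ⟨1, 𝒢.one_mem, 1, one_ne_zero, by rw [UnitaryGroup.one_val, one_mulVec, one_smul]⟩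

lemma mem_monomialOrbit_of_entry_ne_zero {U : unitaryGroup n α} (hU : U ∈ 𝒢)
    (hUmono : (U : Matrix n n α).IsMonomial) {i r : n} (hi : i ∈ monomialOrbit 𝒢 s)
    (hri : (U : Matrix n n α) r i ≠ 0) : r ∈ monomialOrbit 𝒢 s := by
  obtain ⟨W, hW, d, hd, hWd⟩ := hi
  obtain ⟨c, t, hUi⟩ := hUmono i
  refine ⟨U * W, mul_mem hU hW, d * U r i, mul_ne_zero hd hri, ?_⟩
  rw [UnitaryGroup.mul_val, ← mulVec_mulVec, hWd, mulVec_smul,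
    mulVec_single_eq_apply_smul_of_apply_ne_zero hUi hri, smul_smul]

lemma mem_monomialOrbit_iff_of_entry_ne_zero (hmono : ∀ U ∈ 𝒢, (U : Matrix n n α).IsMonomial)
    {U : unitaryGroup n α} (hU : U ∈ 𝒢) {r i : n} (hri : (U : Matrix n n α) r i ≠ 0) :
    i ∈ monomialOrbit 𝒢 s ↔ r ∈ monomialOrbit 𝒢 s :=
  ⟨fun hi => mem_monomialOrbit_of_entry_ne_zero hU (hmono U hU) hi hri,
    fun hr => mem_monomialOrbit_of_entry_ne_zero (inv_mem hU) (hmono _ (inv_mem hU)) hr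
      (by simpa [star_apply] using hri)⟩

variable {ψ : n → α} (heig : ∀ U ∈ 𝒢, (U : Matrix n n α) *ᵥ ψ = ψ)
include heig

lemma apply_ne_zero_of_mem_monomialOrbit (hs : ψ s ≠ 0) {t : n} (ht : t ∈ monomialOrbit 𝒢 s) :
    ψ t ≠ 0 := by
  obtain ⟨U, hU, c, -, h⟩ := ht
  intro ht0
  rw [apply_eq_star_mul_of_mulVec_single h (heig U hU), ht0, mul_zero] at hs
  exact hs rfl

lemma mem_monomialOrbit_of_apply_ne_zero (hmono : ∀ U ∈ 𝒢, (U : Matrix n n α).IsMonomial)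
    (huniq : ∀ φ : n → α, (∀ U ∈ 𝒢, (U : Matrix n n α) *ᵥ φ = φ) → ∃ c : α, φ = c • ψ)
    (hs : ψ s ≠ 0) {t : n} (ht : ψ t ≠ 0) : t ∈ monomialOrbit 𝒢 s := by
  have hfix : ∀ U ∈ 𝒢, (U : Matrix n n α) *ᵥ (monomialOrbit 𝒢 s).indicator ψ =
      (monomialOrbit 𝒢 s).indicator ψ := fun U hU => by
    rw [mulVec_indicator (fun r i => mem_monomialOrbit_iff_of_entry_ne_zero hmono hU), heig U hU]
  obtain ⟨k, hk⟩ := huniq _ hfix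
  have hk1 : k = 1 := by
    have hks := congrFun hk s
    rw [Set.indicator_of_mem self_mem_monomialOrbit, Pi.smul_apply, smul_eq_mul] at hks
    exact (mul_eq_right₀ hs).1 hks.symm
  by_contra hnot
  have hkt := congrFun hk t
  rw [Set.indicator_of_notMem hnot, hk1, one_smul] at hkt
  exact ht hkt.symm

end MonomialGroup

theorem stmt_14_general {S : Type*} [Fintype S] [DecidableEq S]
    (𝒢 : Subgroup (Matrix.unitaryGroup S ℂ))
    (hmono : ∀ U ∈ 𝒢, ∀ s : S, ∃ (c : ℂ) (t : S),
      (U : Matrix S S ℂ).mulVec (Pi.single s 1) = c • (Pi.single t 1 : S → ℂ))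
    (ψ : S → ℂ)
    (heig : ∀ U ∈ 𝒢, (U : Matrix S S ℂ).mulVec ψ = ψ)
    (huniq : ∀ φ : S → ℂ, (∀ U ∈ 𝒢, (U : Matrix S S ℂ).mulVec φ = φ) →
      ∃ c : ℂ, φ = c • ψ) :
    (∀ s t : S, ψ s ≠ 0 → ψ t ≠ 0 → ‖ψ s‖ = ‖ψ t‖) ∧
    (∀ s : S, ψ s ≠ 0 →
      {t : S | ψ t ≠ 0} =
        {t : S | ∃ U ∈ 𝒢, ∃ c : ℂ, c ≠ 0 ∧
          (U : Matrix S S ℂ).mulVec (Pi.single s 1) = c • (Pi.single t 1 : S → ℂ)}) := by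
  have support_subset {s t : S} (hs : ψ s ≠ 0) (ht : ψ t ≠ 0) : t ∈ monomialOrbit 𝒢 s :=
    mem_monomialOrbit_of_apply_ne_zero heig hmono huniq hs ht
  refine ⟨fun s t hs ht => ?_, fun s hs => ?_⟩
  · obtain ⟨U, hU, c, -, h⟩ := support_subset hs ht
    rw [apply_eq_star_mul_of_mulVec_single h (heig U hU), norm_mul, norm_star,
      norm_eq_one_of_mulVec_single U h, one_mul]
  · ext t
    exact ⟨support_subset hs, apply_ne_zero_of_mem_monomialOrbit heig hs⟩

/-- Let `𝒢` be a group of monomial unitary matrices over a finite nonempty index type `S`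
and let `ψ` be the unique common `+1` eigenvector of `𝒢`. Then (a) all nonzero amplitudes
of `ψ` are equal in modulus, and (b) for every `s` in the support of `ψ`, the support of
`ψ` equals the orbit `O_s`. -/
theorem stmt_14 {S : Type*} [Fintype S] [DecidableEq S] [Nonempty S]
    (𝒢 : Subgroup (Matrix.unitaryGroup S ℂ))
    (hmono : ∀ U ∈ 𝒢, ∀ s : S, ∃ (c : ℂ) (t : S),
      (U : Matrix S S ℂ).mulVec (Pi.single s 1) = c • (Pi.single t 1 : S → ℂ))
    (ψ : S → ℂ) (hψ : ψ ≠ 0)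
    (heig : ∀ U ∈ 𝒢, (U : Matrix S S ℂ).mulVec ψ = ψ)
    (huniq : ∀ φ : S → ℂ, (∀ U ∈ 𝒢, (U : Matrix S S ℂ).mulVec φ = φ) →
      ∃ c : ℂ, φ = c • ψ) :
    (∀ s t : S, ψ s ≠ 0 → ψ t ≠ 0 → ‖ψ s‖ = ‖ψ t‖) ∧
    (∀ s : S, ψ s ≠ 0 →
      {t : S | ψ t ≠ 0} =
        {t : S | ∃ U ∈ 𝒢, ∃ c : ℂ, c ≠ 0 ∧
          (U : Matrix S S ℂ).mulVec (Pi.single s 1) = c • (Pi.single t 1 : S → ℂ)}) :=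
  stmt_14_general 𝒢 hmono ψ heig huniq
end

section
/- Let 𝒢 be a group (under matrix multiplication) of monomial unitary matrices in Matrix S S ℂ and let ψ be the unique common +1 eigenvector of 𝒢. Fix x ∈ S, let 𝒢_x = {U ∈ 𝒢 : ∃ c ∈ ℂ, U.mulVec e_x = c • e_x} (a subgroup of 𝒢), and let T ⊆ 𝒢_x be a subset generating 𝒢_x as a group. Then the support {t ∈ S : ψ(t) ≠ 0} equals the orbit O_x if and only if V.mulVec e_x = e_x for every V ∈ T. -/
/-!
A unitary `U` with `U e_s = c • e_t` has `t`-th row `c • e_sᵀ` (its columns are orthonormal), so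
`(U v) t = c * v s`. If the support of `ψ` is `O_x`, then `ψ x ≠ 0`, and `V ψ = ψ` for
`V e_x = c • e_x` forces `c = 1`.

Conversely, if the generators of `𝒢_x` fix `e_x`, so does all of `𝒢_x`. Then the coefficient `c`
in `U e_x = c • e_t` (`U ∈ 𝒢`) depends only on `t`: two such `U, U'` give `U'⁻¹ U ∈ 𝒢_x`. The
vector `φ t := c` on `O_x`, `φ = 0` off `O_x`, is a common `+1` eigenvector with support `O_x`;
by uniqueness it is a multiple of `ψ`, necessarily a nonzero one since `φ x = 1`.
-/

namespace Matrix

variable {n α : Type*} [Fintype n] [DecidableEq n]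

def IsMonomial_s15 [NonAssocSemiring α] (A : Matrix n n α) : Prop :=
  ∀ s, ∃ (c : α) (t : n), A *ᵥ Pi.single s 1 = c • Pi.single t 1

theorem mul_mulVec_single_eq [CommSemiring α] {A B : Matrix n n α} {r s t : n} {a b : α}
    (hA : A *ᵥ Pi.single s 1 = a • Pi.single t 1)
    (hB : B *ᵥ Pi.single r 1 = b • Pi.single s 1) :
    (A * B) *ᵥ Pi.single r 1 = (a * b) • Pi.single t 1 := by
  rw [← mulVec_mulVec, hB, mulVec_smul, hA, smul_smul, mul_comm]

namespace UnitaryGroup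

variable [CommRing α] [StarRing α]

section Row

variable {U : unitaryGroup n α} {s t : n} {c : α}
  (h : (U : Matrix n n α) *ᵥ Pi.single s 1 = c • Pi.single t 1)
include h

theorem smul_star_row_eq_of_mulVec_single :
    c • star ((U : Matrix n n α).row t) = Pi.single s 1 := by
  have hcol : ∀ i, (U : Matrix n n α) i s = c * (Pi.single t 1 : n → α) i := fun i => by
    simpa using congrFun h i
  funext k
  have hk := congrFun (congrFun (star_mul_self U) k) s
  rw [Matrix.mul_apply, Finset.sum_eq_single t] at hk
  · simpa [hcol, mul_comm, Matrix.one_apply, Pi.single_apply] using hk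
  · intro i _ hi
    simp [hcol, hi]
  · simp

theorem star_mul_self_of_mulVec_single : star c * c = 1 := by
  have hts : (U : Matrix n n α) t s = c := by simpa using congrFun h t
  simpa [hts, mul_comm] using congrFun (smul_star_row_eq_of_mulVec_single h) s

theorem row_eq_of_mulVec_single : (U : Matrix n n α).row t = Pi.single s c := by
  have hstar := congrArg star (smul_star_row_eq_of_mulVec_single h)
  rw [star_smul, star_star, Pi.star_single, star_one] at hstar
  calc (U : Matrix n n α).row t = (c * star c) • (U : Matrix n n α).row t := by
        rw [mul_comm, star_mul_self_of_mulVec_single h, one_smul]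
    _ = Pi.single s c := by rw [mul_smul, hstar, ← Pi.single_smul', smul_eq_mul, mul_one]

theorem mulVec_apply_of_mulVec_single (v : n → α) : ((U : Matrix n n α) *ᵥ v) t = c * v s := by
  change (U : Matrix n n α).row t ⬝ᵥ v = _
  rw [row_eq_of_mulVec_single h, single_dotProduct]

theorem inv_mulVec_single :
    ((U⁻¹ : unitaryGroup n α) : Matrix n n α) *ᵥ Pi.single t 1 = star c • Pi.single s 1 := by
  funext i
  have hi : (U : Matrix n n α) t i = (Pi.single s c : n → α) i :=
    congrFun (row_eq_of_mulVec_single h) i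
  simp [star_apply, hi, Pi.single_apply, apply_ite star]

end Row

def fixingSubgroup (v : n → α) : Subgroup (unitaryGroup n α) where
  carrier := {U | (U : Matrix n n α) *ᵥ v = v}
  one_mem' := one_mulVec v
  mul_mem' {U V} (hU : (U : Matrix n n α) *ᵥ v = v) (hV : (V : Matrix n n α) *ᵥ v = v) := by
    change ((U : Matrix n n α) * (V : Matrix n n α)) *ᵥ v = v
    rw [← mulVec_mulVec, hV, hU]
  inv_mem' {U} (hU : (U : Matrix n n α) *ᵥ v = v) := by
    change ((U⁻¹ : unitaryGroup n α) : Matrix n n α) *ᵥ v = v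
    conv_lhs => rw [← hU]
    rw [mulVec_mulVec, ← mul_val, inv_mul_cancel, one_val, one_mulVec]

section Orbit

variable (𝒢 : Subgroup (unitaryGroup n α)) (x : n)

/-- `t ∈ O_x`, witnessed by the coefficient `c`. -/
def IsOrbitCoeff (t : n) (c : α) : Prop :=
  ∃ U ∈ 𝒢, (U : Matrix n n α) *ᵥ Pi.single x 1 = c • Pi.single t 1

open Classical in
noncomputable def orbitVector (t : n) : α :=
  if h : ∃ c, IsOrbitCoeff 𝒢 x t c then h.choose else 0

variable {𝒢 x}

theorem isOrbitCoeff_self : IsOrbitCoeff 𝒢 x x 1 :=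
  ⟨1, 𝒢.one_mem, by rw [one_val, one_mulVec, one_smul]⟩

theorem IsOrbitCoeff.mul_left {U : unitaryGroup n α} (hU : U ∈ 𝒢) {s t : n} {a c : α}
    (hUs : (U : Matrix n n α) *ᵥ Pi.single s 1 = c • Pi.single t 1)
    (h : IsOrbitCoeff 𝒢 x s a) : IsOrbitCoeff 𝒢 x t (c * a) := by
  obtain ⟨V, hV, hVx⟩ := h
  exact ⟨U * V, mul_mem hU hV, mul_mulVec_single_eq hUs hVx⟩

theorem IsOrbitCoeff.ne_zero [Nontrivial α] {t : n} {c : α} (h : IsOrbitCoeff 𝒢 x t c) :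
    c ≠ 0 := by
  obtain ⟨U, -, hU⟩ := h
  exact right_ne_zero_of_mul_eq_one (star_mul_self_of_mulVec_single hU)

theorem exists_isOrbitCoeff_iff [Nontrivial α] {t : n} :
    (∃ c, IsOrbitCoeff 𝒢 x t c) ↔
      ∃ U ∈ 𝒢, ∃ c : α, c ≠ 0 ∧ (U : Matrix n n α) *ᵥ Pi.single x 1 = c • Pi.single t 1 := by
  constructor
  · rintro ⟨c, U, hU, hUx⟩
    exact ⟨U, hU, c, IsOrbitCoeff.ne_zero ⟨U, hU, hUx⟩, hUx⟩
  · rintro ⟨U, hU, c, -, hUx⟩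
    exact ⟨c, U, hU, hUx⟩

/-- The hypothesis `hx` says that the stabiliser `𝒢_x` fixes `e_x`. -/
theorem IsOrbitCoeff.eq (hx : ∀ c, IsOrbitCoeff 𝒢 x x c → c = 1) {t : n} {c c' : α}
    (h : IsOrbitCoeff 𝒢 x t c) (h' : IsOrbitCoeff 𝒢 x t c') : c = c' := by
  obtain ⟨U', hU', hU'x⟩ := h'
  have hunit := star_mul_self_of_mulVec_single hU'x
  have hone := hx _ (h.mul_left (inv_mem hU') (inv_mulVec_single hU'x))
  calc c = (star c' * c') * c := by rw [hunit, one_mul]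
    _ = c' := by rw [mul_comm (star c'), mul_assoc, hone, mul_one]

theorem orbitVector_eq (hx : ∀ c, IsOrbitCoeff 𝒢 x x c → c = 1) {t : n} {c : α}
    (h : IsOrbitCoeff 𝒢 x t c) : orbitVector 𝒢 x t = c := by
  have hex : ∃ c, IsOrbitCoeff 𝒢 x t c := ⟨c, h⟩
  rw [orbitVector, dif_pos hex]
  exact hex.choose_spec.eq hx h

theorem orbitVector_eq_zero {t : n} (h : ¬∃ c, IsOrbitCoeff 𝒢 x t c) : orbitVector 𝒢 x t = 0 :=
  dif_neg h

theorem orbitVector_ne_zero_iff [Nontrivial α] (hx : ∀ c, IsOrbitCoeff 𝒢 x x c → c = 1)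
    {t : n} : orbitVector 𝒢 x t ≠ 0 ↔ ∃ c, IsOrbitCoeff 𝒢 x t c := by
  constructor
  · exact not_imp_comm.1 orbitVector_eq_zero
  · rintro ⟨c, hc⟩
    rw [orbitVector_eq hx hc]
    exact hc.ne_zero

theorem exists_mulVec_single_eq_smul_single (hmono : ∀ U ∈ 𝒢, IsMonomial_s15 (U : Matrix n n α))
    {U : unitaryGroup n α} (hU : U ∈ 𝒢) (t : n) :
    ∃ (s : n) (c : α), (U : Matrix n n α) *ᵥ Pi.single s 1 = c • Pi.single t 1 := by
  obtain ⟨c, s, hs⟩ := hmono _ (inv_mem hU) t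
  exact ⟨s, star c, by simpa using inv_mulVec_single hs⟩

theorem mulVec_orbitVector (hmono : ∀ U ∈ 𝒢, IsMonomial_s15 (U : Matrix n n α))
    (hx : ∀ c, IsOrbitCoeff 𝒢 x x c → c = 1) {U : unitaryGroup n α} (hU : U ∈ 𝒢) :
    (U : Matrix n n α) *ᵥ orbitVector 𝒢 x = orbitVector 𝒢 x := by
  funext t
  obtain ⟨s, c, hst⟩ := exists_mulVec_single_eq_smul_single hmono hU t
  rw [mulVec_apply_of_mulVec_single hst]
  by_cases hs : ∃ a, IsOrbitCoeff 𝒢 x s a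
  · obtain ⟨a, ha⟩ := hs
    rw [orbitVector_eq hx ha, orbitVector_eq hx (ha.mul_left hU hst)]
  · rw [orbitVector_eq_zero hs, mul_zero, orbitVector_eq_zero]
    rintro ⟨b, hb⟩
    exact hs ⟨_, hb.mul_left (inv_mem hU) (inv_mulVec_single hst)⟩

end Orbit

end UnitaryGroup

end Matrix

open Matrix.UnitaryGroup in
theorem stmt_15_general {S : Type*} [Fintype S] [DecidableEq S]
    (𝒢 : Subgroup (Matrix.unitaryGroup S ℂ))
    (hmono : ∀ U ∈ 𝒢, ∀ s : S, ∃ (c : ℂ) (t : S),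
      (U : Matrix S S ℂ).mulVec (Pi.single s 1) = c • (Pi.single t 1 : S → ℂ))
    (ψ : S → ℂ)
    (heig : ∀ U ∈ 𝒢, (U : Matrix S S ℂ).mulVec ψ = ψ)
    (huniq : ∀ φ : S → ℂ, (∀ U ∈ 𝒢, (U : Matrix S S ℂ).mulVec φ = φ) →
      ∃ c : ℂ, φ = c • ψ)
    (x : S) (T : Set (Matrix.unitaryGroup S ℂ))
    -- `T` is contained in the stabilizer `𝒢_x` ...
    (hTsub : T ⊆ {U : Matrix.unitaryGroup S ℂ | U ∈ 𝒢 ∧ ∃ c : ℂ,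
      (U : Matrix S S ℂ).mulVec (Pi.single x 1) = c • (Pi.single x 1 : S → ℂ)})
    -- ... and generates it as a group:
    (hTgen : {U : Matrix.unitaryGroup S ℂ | U ∈ 𝒢 ∧ ∃ c : ℂ,
      (U : Matrix S S ℂ).mulVec (Pi.single x 1) = c • (Pi.single x 1 : S → ℂ)}
        ⊆ ↑(Subgroup.closure T)) :
    {t : S | ψ t ≠ 0} =
      {t : S | ∃ U ∈ 𝒢, ∃ c : ℂ, c ≠ 0 ∧
        (U : Matrix S S ℂ).mulVec (Pi.single x 1) = c • (Pi.single t 1 : S → ℂ)} ↔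
    ∀ V ∈ T, (V : Matrix S S ℂ).mulVec (Pi.single x 1) = Pi.single x 1 := by
  constructor
  · intro hsupp V hV
    obtain ⟨hV𝒢, c, hc⟩ := hTsub hV
    have hψx : ψ x ≠ 0 :=
      (Set.ext_iff.1 hsupp x).2 (exists_isOrbitCoeff_iff.1 ⟨1, isOrbitCoeff_self⟩)
    have hc_mul : c * ψ x = ψ x := by
      rw [← mulVec_apply_of_mulVec_single hc, heig V hV𝒢]
    rw [hc, (mul_eq_right₀ hψx).1 hc_mul, one_smul]
  · intro hT
    have hx : ∀ c, IsOrbitCoeff 𝒢 x x c → c = 1 := by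
      rintro c ⟨U, hU, hUx⟩
      have hfix : U ∈ fixingSubgroup (Pi.single x (1 : ℂ)) :=
        (Subgroup.closure_le _).2 (fun V hV => hT V hV) (hTgen ⟨hU, c, hUx⟩)
      simpa using congrFun (hUx.symm.trans hfix) x
    obtain ⟨k, hk⟩ := huniq _ fun U hU => mulVec_orbitVector hmono hx hU
    have hk_apply : ∀ t, orbitVector 𝒢 x t = k * ψ t := fun t => congrFun hk t
    have hk0 : k ≠ 0 := left_ne_zero_of_mul_eq_one <| by
      rw [← hk_apply, orbitVector_eq hx isOrbitCoeff_self]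
    ext t
    calc ψ t ≠ 0 ↔ orbitVector 𝒢 x t ≠ 0 := by rw [hk_apply, mul_ne_zero_iff_left hk0]
      _ ↔ _ := (orbitVector_ne_zero_iff hx).trans exists_isOrbitCoeff_iff

/-- Let `𝒢` be a group of monomial unitary matrices with unique common `+1` eigenvector
`ψ`, fix `x : S`, let `𝒢_x` be the stabilizer subgroup of all `U ∈ 𝒢` with
`U e_x ∝ e_x`, and let `T` be a set of generators of `𝒢_x`. Then the support of `ψ`
equals the orbit `O_x` iff `V e_x = e_x` for every `V ∈ T`. -/
theorem stmt_15 {S : Type*} [Fintype S] [DecidableEq S] [Nonempty S]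
    (𝒢 : Subgroup (Matrix.unitaryGroup S ℂ))
    (hmono : ∀ U ∈ 𝒢, ∀ s : S, ∃ (c : ℂ) (t : S),
      (U : Matrix S S ℂ).mulVec (Pi.single s 1) = c • (Pi.single t 1 : S → ℂ))
    (ψ : S → ℂ) (hψ : ψ ≠ 0)
    (heig : ∀ U ∈ 𝒢, (U : Matrix S S ℂ).mulVec ψ = ψ)
    (huniq : ∀ φ : S → ℂ, (∀ U ∈ 𝒢, (U : Matrix S S ℂ).mulVec φ = φ) →
      ∃ c : ℂ, φ = c • ψ)
    (x : S) (T : Set (Matrix.unitaryGroup S ℂ))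
    -- `T` is contained in the stabilizer `𝒢_x` ...
    (hTsub : T ⊆ {U : Matrix.unitaryGroup S ℂ | U ∈ 𝒢 ∧ ∃ c : ℂ,
      (U : Matrix S S ℂ).mulVec (Pi.single x 1) = c • (Pi.single x 1 : S → ℂ)})
    -- ... and generates it as a group:
    (hTgen : {U : Matrix.unitaryGroup S ℂ | U ∈ 𝒢 ∧ ∃ c : ℂ,
      (U : Matrix S S ℂ).mulVec (Pi.single x 1) = c • (Pi.single x 1 : S → ℂ)}
        ⊆ ↑(Subgroup.closure T)) :
    {t : S | ψ t ≠ 0} =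
      {t : S | ∃ U ∈ 𝒢, ∃ c : ℂ, c ≠ 0 ∧
        (U : Matrix S S ℂ).mulVec (Pi.single x 1) = c • (Pi.single t 1 : S → ℂ)} ↔
    ∀ V ∈ T, (V : Matrix S S ℂ).mulVec (Pi.single x 1) = Pi.single x 1 :=
  stmt_15_general 𝒢 hmono ψ heig huniq x T hTsub hTgen
end

section
/- Let π : G ≃ G be a bijection and let U ∈ Matrix G G ℂ be the associated permutation matrix with U_{h,k} = 1 if h = π(k) and 0 otherwise. Suppose that for every g ∈ G there exist a ∈ ℕ and u, v ∈ G such that U·X(g)·Uᴴ = γ^a • (Z(u)·X(v)), i.e. U conjugates every X(g) into a Pauli operator over G. Then π is affine: there exist an additive automorphism α : G ≃+ G and an element t ∈ G such that π(g) = α(g) + t for every g ∈ G. -/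
open scoped Matrix

/-- If the permutation matrix `U` of a bijection `perm : G ≃ G` conjugates every `X(g)`
into a Pauli operator `γ^a • Z(u)X(v)` (with `γ = exp(πi/𝔤)`), then `perm` is affine:
`perm(g) = α(g) + t` for some additive automorphism `α` and some `t ∈ G`. -/
theorem stmt_17 (m : ℕ) (hm : 0 < m) (d : Fin m → ℕ) [∀ i, NeZero (d i)]
    (perm : (∀ i, ZMod (d i)) ≃ (∀ i, ZMod (d i)))
    (U : Matrix (∀ i, ZMod (d i)) (∀ i, ZMod (d i)) ℂ)
    (hU : ∀ h k, U h k = if h = perm k then (1 : ℂ) else 0)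
    (γ : ℂ)
    (hγ : γ = Complex.exp (Real.pi * Complex.I / (Fintype.card (∀ i, ZMod (d i)) : ℂ)))
    (hPauli : ∀ g : ∀ i, ZMod (d i), ∃ (a : ℕ) (u v : ∀ i, ZMod (d i)),
      U * Xop g * Uᴴ = γ ^ a • (Zop u * Xop v)) :
    ∃ (α : (∀ i, ZMod (d i)) ≃+ (∀ i, ZMod (d i))) (t : ∀ i, ZMod (d i)),
      ∀ g, perm g = α g + t := by
    classical
  have hγ0 : γ ≠ 0 := by rw [hγ]; exact Complex.exp_ne_zero _
  have hUH : ∀ j k, (Uᴴ) j k = if k = perm j then (1:ℂ) else 0 := by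
    intro j k
    simp [Matrix.conjTranspose_apply, hU, apply_ite (star : ℂ → ℂ)]
  have key : ∀ g x, perm (x + g) = perm x + (perm g - perm 0) := by
    intro g
    obtain ⟨a, u, v, hEq⟩ := hPauli g
    have main : ∀ x, perm (x + g) = perm x + v := by
      intro x
      have hL : (U * Xop g * Uᴴ) (perm (x+g)) (perm x) = 1 := by
        simp only [Matrix.mul_apply, hU, hUH, Xop, Matrix.of_apply]
        rw [Finset.sum_eq_single x]
        · simp [Equiv.apply_eq_iff_eq]
        · intro b _ hb
          simp [Equiv.apply_eq_iff_eq, hb, Ne.symm hb]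
        · simp
      have h2 : (1:ℂ) = (γ ^ a • (Zop u * Xop v)) (perm (x+g)) (perm x) := by
        rw [← hL, hEq]
      rw [Matrix.smul_apply, Zop, Matrix.diagonal_mul, Xop, Matrix.of_apply] at h2
      by_contra hne
      rw [if_neg hne] at h2
      simp at h2
    have hv : v = perm g - perm 0 := by
      have := main 0
      rw [zero_add] at this
      rw [this]; abel
    intro x; rw [main x, hv]
  refine ⟨AddEquiv.mk' (perm.trans (Equiv.subRight (perm 0))) ?_, perm 0, ?_⟩
  · intro a b
    simp only [Equiv.trans_apply, Equiv.subRight_apply]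
    rw [add_comm a b, key a b]
    abel
  · intro g
    show perm g = perm g - perm 0 + perm 0
    abel
end

section
/- Let p and q be distinct primes, let N = p·q, let m ≥ 2 be a natural number, and let a ∈ ℕ be coprime to N with (a : ZMod N) ≠ 1. Then the modular exponentiation map F : ZMod (2^m) × ZMod N → ZMod (2^m) × ZMod N defined by F(x, y) = (x, y + (a : ZMod N)^(x.val)) is not affine: there exist no additive automorphism α : (ZMod (2^m) × ZMod N) ≃+ (ZMod (2^m) × ZMod N) and no element t ∈ ZMod (2^m) × ZMod N such that F(x, y) = α(x, y) + t for all (x, y). -/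
/-!
An affine map `F = α + t` satisfies `F (2g) + F 0 = 2 F g`. For `g = (1, 0)` and `2 < n`, the second
coordinate of this identity for `(x, y) ↦ (x, y + u ^ x.val)` reads `u² + 1 = 2u`, i.e. `(u - 1)² = 0`,
which forces `u = 1` in a reduced ring such as `ZMod (p * q)`.
-/

theorem map_add_self_add_map_zero_of_affine {G H Φ : Type*} [AddZeroClass G] [AddCommMonoid H]
    [FunLike Φ G H] [AddMonoidHomClass Φ G H] {F : G → H} (α : Φ) (t : H)
    (hF : ∀ g, F g = α g + t) (g : G) : F (g + g) + F 0 = F g + F g := by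
  simp only [hF, map_add, map_zero, zero_add]
  abel

theorem eq_one_of_sq_add_one_eq_add_self {R : Type*} [CommRing R] [IsReduced R] {u : R}
    (h : u ^ 2 + 1 = u + u) : u = 1 := by
  have hsq : (u - 1) ^ 2 = 0 := by linear_combination h
  exact sub_eq_zero.mp (IsReduced.eq_zero _ ⟨2, hsq⟩)

theorem not_affine_add_pow_val {n : ℕ} (hn : 2 < n) {R : Type*} [CommRing R] [IsReduced R]
    {u : R} (hu : u ≠ 1) :
    ¬ ∃ (α : (ZMod n × R) ≃+ (ZMod n × R)) (t : ZMod n × R),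
      ∀ (x : ZMod n) (y : R), (x, y + u ^ x.val) = α (x, y) + t := by
  rintro ⟨α, t, hα⟩
  have : Fact (1 < n) := ⟨by omega⟩
  have key := map_add_self_add_map_zero_of_affine (F := fun g : ZMod n × R => (g.1, g.2 + u ^ g.1.val))
    α t (fun g => hα g.1 g.2) (1, 0)
  have hval2 : (1 + 1 : ZMod n).val = 2 := by
    rw [one_add_one_eq_two, ZMod.val_ofNat_of_lt hn]
  refine hu (eq_one_of_sq_add_one_eq_add_self ?_)
  simpa [hval2, ZMod.val_one] using congrArg Prod.snd key

theorem squarefree_mul_of_prime_of_ne {p q : ℕ} (hp : p.Prime) (hq : q.Prime) (hpq : p ≠ q) :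
    Squarefree (p * q) :=
  (Nat.squarefree_mul ((Nat.coprime_primes hp hq).mpr hpq)).mpr ⟨hp.squarefree, hq.squarefree⟩

theorem stmt_18_general (p q : ℕ) (hp : p.Prime) (hq : q.Prime) (hpq : p ≠ q)
    (N : ℕ) (hN : N = p * q) (m : ℕ) (hm : 2 ≤ m)
    (a : ℕ) (ha1 : (a : ZMod N) ≠ 1) :
    ¬ ∃ (α : (ZMod (2 ^ m) × ZMod N) ≃+ (ZMod (2 ^ m) × ZMod N))
        (t : ZMod (2 ^ m) × ZMod N),
      ∀ (x : ZMod (2 ^ m)) (y : ZMod N),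
        (x, y + (a : ZMod N) ^ x.val) = α (x, y) + t := by
  have hlt : 2 < 2 ^ m :=
    calc 2 < 2 ^ 2 := by norm_num
      _ ≤ 2 ^ m := Nat.pow_le_pow_right two_pos hm
  have : IsReduced (ZMod N) :=
    isReduced_zmod.mpr (Or.inl (hN ▸ squarefree_mul_of_prime_of_ne hp hq hpq))
  exact not_affine_add_pow_val hlt ha1

/-- The modular exponentiation map `(x, y) ↦ (x, y + a^x)` on `ZMod (2^m) × ZMod N`
(with `N = pq` a product of two distinct primes, `m ≥ 2`, `a` coprime to `N` and
`a ≢ 1 mod N`) is not an affine map `g ↦ α(g) + t`. -/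
theorem stmt_18 (p q : ℕ) (hp : p.Prime) (hq : q.Prime) (hpq : p ≠ q)
    (N : ℕ) (hN : N = p * q) (m : ℕ) (hm : 2 ≤ m)
    (a : ℕ) (ha : Nat.Coprime a N) (ha1 : (a : ZMod N) ≠ 1) :
    ¬ ∃ (α : (ZMod (2 ^ m) × ZMod N) ≃+ (ZMod (2 ^ m) × ZMod N))
        (t : ZMod (2 ^ m) × ZMod N),
      ∀ (x : ZMod (2 ^ m)) (y : ZMod N),
        (x, y + (a : ZMod N) ^ x.val) = α (x, y) + t :=
  stmt_18_general p q hp hq hpq N hN m hm a ha1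
end
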